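/- arXiv:1506.08706 — 6 statements merged into one kernel-verified Lean document; each statement's English description precedes it below -/
import Mathlib

section
/- (Well-definedness of κ(h), §2.4.) Fix a strictly positive rational κ_ρ for each ρ ∈ D₋, and for an admissible finite subset D ⊆ ι set κ_ρ := θ(ρ) + S_D/(d·h(ρ)) for ρ ∈ D \ D₋ and κ_D(h) := ∑_{ρ∈D} κ_ρ·h(ρ). Then for every admissible D one has κ_D(h) = ∑_{ρ∈D₋} κ_ρ·h(ρ) + ∑_{ρ∈D₊} θ(ρ)·h(ρ) (the series over D₊ being summable); in particular κ_D(h) does not depend on the choice of the admissible subset D. -/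
open scoped BigOperators

noncomputable section

/-- The value `θ(h') = ∑_ρ θ(ρ)·h'(ρ)` of a stability function on a Hilbert function. -/
def thetaVal {ι : Type*} (θ : ι → ℚ) (h' : ι → ℕ) : ℝ :=
  ∑' ρ : ι, (θ ρ : ℝ) * (h' ρ : ℝ)

/-- `r(h') = ∑_{ρ ∈ D₋} h'(ρ)`, the sum of the multiplicities over the negative part
`D₋ = {ρ | θ ρ < 0}`. -/
def rkNeg {ι : Type*} (θ : ι → ℚ) (h' : ι → ℕ) : ℝ :=
  ∑' ρ : {ρ : ι // θ ρ < 0}, (h' ρ.1 : ℝ)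

/-- The θ-slope `μ_θ(h') = −θ(h')/r(h')`. -/
def muTheta {ι : Type*} (θ : ι → ℚ) (h' : ι → ℕ) : ℝ :=
  -thetaVal θ h' / rkNeg θ h'

/-- `θ` is a stability function for the Hilbert function `h`: `D₋ = {θ < 0}` is finite,
`D₊ = {θ > 0}` is infinite, `θ` vanishes where `h` does, and `ρ ↦ θ(ρ)·h(ρ)` is summable
with sum `0`. -/
structure IsStabilityFunction {ι : Type*} (h : ι → ℕ) (θ : ι → ℚ) : Prop where
  finite_neg : {ρ : ι | θ ρ < 0}.Finite
  infinite_pos : {ρ : ι | 0 < θ ρ}.Infinite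
  theta_eq_zero_of_h_eq_zero : ∀ ρ, h ρ = 0 → θ ρ = 0
  summable : Summable fun ρ : ι => (θ ρ : ℝ) * (h ρ : ℝ)
  thetaVal_eq_zero : thetaVal θ h = 0

/-- `D` is an admissible finite subset: `D₋ ⊆ D ⊆ supp h` and `D ∩ D₊ ≠ ∅`. -/
def Admissible {ι : Type*} (h : ι → ℕ) (θ : ι → ℚ) (D : Finset ι) : Prop :=
  {ρ : ι | θ ρ < 0} ⊆ (D : Set ι) ∧ (D : Set ι) ⊆ {ρ : ι | h ρ ≠ 0} ∧ ∃ ρ ∈ D, 0 < θ ρ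

/-- `S_D = ∑_{ρ ∉ D} θ(ρ)·h(ρ)`. -/
def SD {ι : Type*} (h : ι → ℕ) (θ : ι → ℚ) (D : Finset ι) : ℝ :=
  ∑' ρ : {ρ : ι // ρ ∉ D}, (θ ρ.1 : ℝ) * (h ρ.1 : ℝ)

/-- The finite set `D \ D₋`. -/
def DsubNeg {ι : Type*} (θ : ι → ℚ) (D : Finset ι) : Finset ι :=
  D.filter fun ρ => 0 ≤ θ ρ

/-- `d = card (D \ D₋)`. -/
def dD {ι : Type*} (θ : ι → ℚ) (D : Finset ι) : ℕ :=
  (DsubNeg θ D).card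

/-- The D-slope
`μ_D(h') = (−1/r(h'))·( ∑_{ρ∈D} θ(ρ)h'(ρ) + (S_D/d)·∑_{ρ∈D∖D₋} h'(ρ)/h(ρ) )`. -/
def muD {ι : Type*} (h : ι → ℕ) (θ : ι → ℚ) (D : Finset ι) (h' : ι → ℕ) : ℝ :=
  (-1 / rkNeg θ h') *
    ((∑ ρ ∈ D, (θ ρ : ℝ) * (h' ρ : ℝ)) +
      (SD h θ D / (dD θ D : ℝ)) * ∑ ρ ∈ DsubNeg θ D, (h' ρ : ℝ) / (h ρ : ℝ))

/-- The GIT parameter `κ_ρ`: a fixed positive rational `κ₀ ρ` for `ρ ∈ D₋`, and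
`θ(ρ) + S_D/(d·h(ρ))` for `ρ ∈ D \ D₋`. -/
def kappaCoef {ι : Type*} (h : ι → ℕ) (θ : ι → ℚ) (D : Finset ι) (κ₀ : ι → ℚ)
    (ρ : ι) : ℝ :=
  if θ ρ < 0 then (κ₀ ρ : ℝ)
  else (θ ρ : ℝ) + SD h θ D / ((dD θ D : ℝ) * (h ρ : ℝ))

/-- `κ_D(h') = ∑_{ρ∈D} κ_ρ·h'(ρ)`. -/
def kappaD {ι : Type*} (h : ι → ℕ) (θ : ι → ℚ) (D : Finset ι) (κ₀ : ι → ℚ)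
    (h' : ι → ℕ) : ℝ :=
  ∑ ρ ∈ D, kappaCoef h θ D κ₀ ρ * (h' ρ : ℝ)

/-- Well-definedness of `κ(h)` (§2.4): for every admissible `D` one has
`κ_D(h) = ∑_{ρ∈D₋} κ₀(ρ)h(ρ) + ∑_{ρ∈D₊} θ(ρ)h(ρ)` (the series over `D₊` being
summable); in particular `κ_D(h)` does not depend on the admissible subset `D`. -/
theorem kappaD_welldefined {ι : Type*} (h : ι → ℕ) (θ : ι → ℚ)
    (hθ : IsStabilityFunction h θ) (κ₀ : ι → ℚ) (hκ₀ : ∀ ρ, θ ρ < 0 → 0 < κ₀ ρ) :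
    (Summable fun ρ : {ρ : ι // 0 < θ ρ} => (θ ρ.1 : ℝ) * (h ρ.1 : ℝ)) ∧
    (∀ D : Finset ι, Admissible h θ D →
      kappaD h θ D κ₀ h =
        (∑ ρ ∈ hθ.finite_neg.toFinset, (κ₀ ρ : ℝ) * (h ρ : ℝ)) +
          ∑' ρ : {ρ : ι // 0 < θ ρ}, (θ ρ.1 : ℝ) * (h ρ.1 : ℝ)) ∧
    (∀ D₁ D₂ : Finset ι, Admissible h θ D₁ → Admissible h θ D₂ →
      kappaD h θ D₁ κ₀ h = kappaD h θ D₂ κ₀ h) := by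
  classical
  have hsum := hθ.summable
  have hsub : Summable fun ρ : {ρ : ι // 0 < θ ρ} => (θ ρ.1 : ℝ) * (h ρ.1 : ℝ) :=
    hsum.subtype _
  set f : ι → ℝ := fun ρ => (θ ρ : ℝ) * (h ρ : ℝ) with hf
  -- Lemma A: tsum over positive part equals minus the finite sum over negatives
  have hA : (∑' ρ : {ρ : ι // 0 < θ ρ}, f ρ.1)
      = -∑ ρ ∈ hθ.finite_neg.toFinset, f ρ := by
    have hsplit := Summable.sum_add_tsum_compl hsum (s := hθ.finite_neg.toFinset)
    have h0 : (∑' ρ : ι, f ρ) = 0 := hθ.thetaVal_eq_zero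
    have hcompl : (∑' ρ : ((hθ.finite_neg.toFinset : Set ι)ᶜ : Set ι), f ρ.1)
        = ∑' ρ : {ρ : ι // 0 < θ ρ}, f ρ.1 := by
      have h1 : (∑' ρ : ((hθ.finite_neg.toFinset : Set ι)ᶜ : Set ι), f ρ.1)
          = ∑' ρ : ι, Set.indicator ((hθ.finite_neg.toFinset : Set ι)ᶜ) f ρ :=
        tsum_subtype _ f
      have h2 : (∑' ρ : {ρ : ι // 0 < θ ρ}, f ρ.1)
          = ∑' ρ : ι, Set.indicator {ρ : ι | 0 < θ ρ} f ρ :=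
        tsum_subtype _ f
      rw [h1, h2]
      refine tsum_congr fun ρ => ?_
      rcases lt_trichotomy (θ ρ) 0 with hlt | heq | hgt
      · have hmem : ρ ∈ (hθ.finite_neg.toFinset : Set ι) := by
          simp [Set.Finite.mem_toFinset, hlt]
        rw [Set.indicator_of_notMem (by simpa using hmem),
          Set.indicator_of_notMem (by simp [not_lt.2 hlt.le])]
      · have hfz : f ρ = 0 := by simp [hf, heq]
        simp [Set.indicator_apply, hfz]
      · have hmem : ρ ∉ (hθ.finite_neg.toFinset : Set ι) := by
          simp [Set.Finite.mem_toFinset, not_lt.2 hgt.le]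
        rw [Set.indicator_of_mem (by simpa using hmem),
          Set.indicator_of_mem (by simpa using hgt)]
    rw [hcompl, h0] at hsplit
    linarith
  -- main formula
  have key : ∀ D : Finset ι, Admissible h θ D →
      kappaD h θ D κ₀ h =
        (∑ ρ ∈ hθ.finite_neg.toFinset, (κ₀ ρ : ℝ) * (h ρ : ℝ)) +
          ∑' ρ : {ρ : ι // 0 < θ ρ}, (θ ρ.1 : ℝ) * (h ρ.1 : ℝ) := by
    intro D hD
    obtain ⟨hDneg, hDsupp, ρ₀, hρ₀D, hρ₀pos⟩ := hD
    -- S_D = - ∑_{ρ ∈ D} f ρ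
    have hSD : SD h θ D = -∑ ρ ∈ D, f ρ := by
      have hsplit := Summable.sum_add_tsum_compl hsum (s := D)
      have h0 : (∑' ρ : ι, f ρ) = 0 := hθ.thetaVal_eq_zero
      have hc : (∑' ρ : ((D : Set ι)ᶜ : Set ι), f ρ.1)
          = SD h θ D := by
        rw [tsum_subtype _ f]
        rw [show SD h θ D = ∑' ρ : ({ρ : ι | ρ ∉ D} : Set ι), f ρ.1 from rfl,
          tsum_subtype _ f]
        refine tsum_congr fun ρ => ?_
        by_cases hρ : ρ ∈ D
        · rw [Set.indicator_of_notMem (by simp [hρ]),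
            Set.indicator_of_notMem (by simp [hρ])]
        · rw [Set.indicator_of_mem (by simp [hρ]),
            Set.indicator_of_mem (by simp [hρ])]
      rw [hc, h0] at hsplit
      linarith
    -- d > 0
    have hρ₀mem : ρ₀ ∈ DsubNeg θ D := by
      simp [DsubNeg, hρ₀D, hρ₀pos.le]
    have hdpos : 0 < (dD θ D : ℝ) := by
      have : 0 < dD θ D := Finset.card_pos.2 ⟨ρ₀, hρ₀mem⟩
      exact_mod_cast this
    -- split kappaD over the filter
    have hsplitD := Finset.sum_filter_add_sum_filter_not D (fun ρ => θ ρ < 0)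
      (fun ρ => kappaCoef h θ D κ₀ ρ * (h ρ : ℝ))
    have hnegfil : D.filter (fun ρ => θ ρ < 0) = hθ.finite_neg.toFinset := by
      ext ρ
      simp only [Finset.mem_filter, Set.Finite.mem_toFinset, Set.mem_setOf_eq]
      exact ⟨fun ⟨_, hρ⟩ => hρ, fun hρ => ⟨hDneg hρ, hρ⟩⟩
    have hposfil : D.filter (fun ρ => ¬ θ ρ < 0) = DsubNeg θ D := by
      simp [DsubNeg, not_lt]
    have hsum1 : ∑ ρ ∈ D.filter (fun ρ => θ ρ < 0),
        kappaCoef h θ D κ₀ ρ * (h ρ : ℝ)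
        = ∑ ρ ∈ hθ.finite_neg.toFinset, (κ₀ ρ : ℝ) * (h ρ : ℝ) := by
      rw [hnegfil]
      refine Finset.sum_congr rfl fun ρ hρ => ?_
      have : θ ρ < 0 := by simpa [Set.Finite.mem_toFinset] using hρ
      simp [kappaCoef, this]
    have hsum2 : ∑ ρ ∈ D.filter (fun ρ => ¬ θ ρ < 0),
        kappaCoef h θ D κ₀ ρ * (h ρ : ℝ)
        = (∑ ρ ∈ DsubNeg θ D, f ρ) + SD h θ D := by
      rw [hposfil]
      have : ∀ ρ ∈ DsubNeg θ D,
          kappaCoef h θ D κ₀ ρ * (h ρ : ℝ) = f ρ + SD h θ D / (dD θ D : ℝ) := by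
        intro ρ hρ
        have hρD : ρ ∈ D := Finset.mem_of_mem_filter ρ hρ
        have hθρ : ¬ θ ρ < 0 := by
          have : 0 ≤ θ ρ := (Finset.mem_filter.1 hρ).2
          exact not_lt.2 this
        have hhρ : (h ρ : ℝ) ≠ 0 := by
          have : h ρ ≠ 0 := hDsupp hρD
          exact_mod_cast this
        rw [kappaCoef, if_neg hθρ]
        field_simp [hf]
        ring
      rw [Finset.sum_congr rfl this, Finset.sum_add_distrib]
      congr 1
      rw [Finset.sum_const, nsmul_eq_mul]
      rw [show ((DsubNeg θ D).card : ℝ) = (dD θ D : ℝ) from rfl]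
      field_simp
    have hDtot : ∑ ρ ∈ D, f ρ
        = (∑ ρ ∈ hθ.finite_neg.toFinset, f ρ) + ∑ ρ ∈ DsubNeg θ D, f ρ := by
      rw [← hnegfil, ← hposfil]
      exact (Finset.sum_filter_add_sum_filter_not D _ f).symm
    have : kappaD h θ D κ₀ h
        = (∑ ρ ∈ hθ.finite_neg.toFinset, (κ₀ ρ : ℝ) * (h ρ : ℝ))
          + ((∑ ρ ∈ DsubNeg θ D, f ρ) + SD h θ D) := by
      rw [kappaD, ← hsplitD, hsum1, hsum2]
    rw [this, hSD, hDtot, hA]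
    ring
  exact ⟨hsub, key, fun D₁ D₂ h1 h2 => by rw [key D₁ h1, key D₂ h2]⟩
end
end

section
/- (Uniform slope comparison bound, from the proof of Proposition 3.2.) For every admissible finite subset D ⊆ ι and every Hilbert function h' with h'(ρ) ≤ h(ρ) for all ρ ∈ ι and r(h') > 0, one has |μ_θ(h') − μ_D(h')| ≤ 2·S_D / r(h'). -/
open scoped BigOperators

noncomputable section

/-- Uniform slope comparison bound (from the proof of Proposition 3.2): for admissible
`D` and `h' ≤ h` with `r(h') > 0`, `|μ_θ(h') − μ_D(h')| ≤ 2·S_D/r(h')`. -/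
theorem slope_difference_bound {ι : Type*} (h : ι → ℕ) (θ : ι → ℚ)
    (hθ : IsStabilityFunction h θ) (D : Finset ι) (hD : Admissible h θ D)
    (h' : ι → ℕ) (hle : ∀ ρ, h' ρ ≤ h ρ) (hr' : 0 < rkNeg θ h') :
    |muTheta θ h' - muD h θ D h'| ≤ 2 * SD h θ D / rkNeg θ h' := by
  obtain ⟨hneg, hsupp, ρ₀, hρ₀D, hρ₀⟩ := hD
  -- summability of θ·h'
  have habs : Summable fun ρ : ι => |(θ ρ : ℝ) * (h ρ : ℝ)| := hθ.summable.abs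
  have hsum' : Summable fun ρ : ι => (θ ρ : ℝ) * (h' ρ : ℝ) := by
    rw [← summable_abs_iff]
    refine habs.of_nonneg_of_le (fun ρ => abs_nonneg _) (fun ρ => ?_)
    rw [abs_mul, abs_mul]
    have : |(h' ρ : ℝ)| ≤ |(h ρ : ℝ)| := by
      rw [abs_of_nonneg (by positivity), abs_of_nonneg (by positivity)]
      exact_mod_cast hle ρ
    exact mul_le_mul_of_nonneg_left this (abs_nonneg _)
  set A := ∑' ρ : {ρ : ι // ρ ∉ D}, (θ ρ.1 : ℝ) * (h' ρ.1 : ℝ) with hA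
  have hsplit : thetaVal θ h' = (∑ ρ ∈ D, (θ ρ : ℝ) * (h' ρ : ℝ)) + A := by
    rw [thetaVal, ← Summable.sum_add_tsum_compl (s := D) hsum']
    rfl
  -- θ is nonneg outside D
  have hθpos : ∀ ρ : ι, ρ ∉ D → (0:ℝ) ≤ (θ ρ : ℝ) := by
    intro ρ hρ
    by_contra hc
    push_neg at hc
    exact hρ (hneg (by exact_mod_cast hc))
  have hA0 : 0 ≤ A := tsum_nonneg fun ρ =>
    mul_nonneg (hθpos ρ.1 ρ.2) (by positivity)
  have hAS : A ≤ SD h θ D := by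
    refine Summable.tsum_le_tsum (fun ρ => ?_) (hsum'.subtype _) (hθ.summable.subtype _)
    exact mul_le_mul_of_nonneg_left (by exact_mod_cast hle ρ.1) (hθpos ρ.1 ρ.2)
  have hS0 : 0 ≤ SD h θ D := by
    refine tsum_nonneg fun ρ => mul_nonneg (hθpos ρ.1 ρ.2) (by positivity)
  -- d ≥ 1
  have hρ₀mem : ρ₀ ∈ DsubNeg θ D := Finset.mem_filter.2 ⟨hρ₀D, le_of_lt hρ₀⟩
  have hd1 : 1 ≤ dD θ D := Finset.card_pos.2 ⟨ρ₀, hρ₀mem⟩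
  have hdpos : (0:ℝ) < (dD θ D : ℝ) := by exact_mod_cast hd1
  -- bounds on Sg := ∑ h'/h
  set Sg := ∑ ρ ∈ DsubNeg θ D, (h' ρ : ℝ) / (h ρ : ℝ) with hSg
  have hSg0 : 0 ≤ Sg := Finset.sum_nonneg fun ρ _ => by positivity
  have hSgd : Sg ≤ (dD θ D : ℝ) := by
    have : Sg ≤ (DsubNeg θ D).card • (1:ℝ) := by
      refine Finset.sum_le_card_nsmul _ _ 1 fun ρ hρ => ?_
      have hρD : ρ ∈ D := (Finset.mem_filter.1 hρ).1
      have hh : h ρ ≠ 0 := hsupp hρD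
      have hhpos : (0:ℝ) < (h ρ : ℝ) := by exact_mod_cast Nat.pos_of_ne_zero hh
      rw [div_le_one hhpos]
      exact_mod_cast hle ρ
    simpa [dD] using this
  set B := SD h θ D / (dD θ D : ℝ) * Sg with hB
  have hB0 : 0 ≤ B := mul_nonneg (div_nonneg hS0 hdpos.le) hSg0
  have hBS : B ≤ SD h θ D := by
    calc B ≤ SD h θ D / (dD θ D : ℝ) * (dD θ D : ℝ) :=
          mul_le_mul_of_nonneg_left hSgd (div_nonneg hS0 hdpos.le)
      _ = SD h θ D := div_mul_cancel₀ _ hdpos.ne'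
  have hdiff : muTheta θ h' - muD h θ D h' = (B - A) / rkNeg θ h' := by
    have hdne : (dD θ D : ℝ) ≠ 0 := hdpos.ne'
    have hrne : rkNeg θ h' ≠ 0 := hr'.ne'
    rw [muTheta, muD, hsplit]
    ring
  rw [hdiff, abs_div, abs_of_pos hr']
  gcongr
  rw [abs_le]
  constructor <;> nlinarith
end
end

section
/- (Proposition 3.2: uniform convergence of the D-slope to the θ-slope.) For every ε > 0 there exists an admissible finite subset D_ε ⊆ ι such that for every admissible finite subset D with D_ε ⊆ D and every Hilbert function h' with h'(ρ) ≤ h(ρ) for all ρ ∈ ι and r(h') > 0, one has |μ_θ(h') − μ_D(h')| < ε. -/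
open scoped BigOperators

noncomputable section

lemma my_tsum_compl_finset_eq {ι : Type*} (f : ι → ℝ) {D A : Finset ι} (hDA : D ⊆ A)
    (h0 : ∀ ρ ∈ A, ρ ∉ D → f ρ = 0) (hf : Summable f) :
    ∑' ρ : {ρ : ι // ρ ∉ D}, f ρ.1 = ∑' ρ : {ρ : ι // ρ ∉ A}, f ρ.1 := by
  have h1 := Summable.sum_add_tsum_compl (s := D) hf
  have h2 := Summable.sum_add_tsum_compl (s := A) hf
  have h3 : ∑ ρ ∈ D, f ρ = ∑ ρ ∈ A, f ρ := Finset.sum_subset hDA h0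
  have e1 : (∑' ρ : ↑((D : Set ι))ᶜ, f ρ) = ∑' ρ : {ρ : ι // ρ ∉ D}, f ρ.1 := rfl
  have e2 : (∑' ρ : ↑((A : Set ι))ᶜ, f ρ) = ∑' ρ : {ρ : ι // ρ ∉ A}, f ρ.1 := rfl
  rw [e1] at h1; rw [e2] at h2; linarith

/-- Proposition 3.2 (uniform convergence of the D-slope to the θ-slope): for every
`ε > 0` there is an admissible finite subset `D_ε` such that for every admissible `D`
containing `D_ε` and every Hilbert function `h' ≤ h` with `r(h') > 0`,
`|μ_θ(h') − μ_D(h')| < ε`. -/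
theorem muD_tendsto_muTheta {ι : Type*} (h : ι → ℕ) (θ : ι → ℚ)
    (hθ : IsStabilityFunction h θ) (ε : ℝ) (hε : 0 < ε) :
    ∃ Dε : Finset ι, Admissible h θ Dε ∧
      ∀ D : Finset ι, Admissible h θ D → Dε ⊆ D →
        ∀ h' : ι → ℕ, (∀ ρ, h' ρ ≤ h ρ) → 0 < rkNeg θ h' →
          |muTheta θ h' - muD h θ D h'| < ε := by
  classical
  obtain ⟨ρ₀, hρ₀⟩ := hθ.infinite_pos.nonempty
  have habs : Summable (fun ρ : ι => |(θ ρ : ℝ) * (h ρ : ℝ)|) := hθ.summable.abs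
  -- pick a finset s with small tail of |θ·h|
  obtain ⟨s, hs⟩ :=
    ((tendsto_tsum_compl_atTop_zero (fun ρ : ι => |(θ ρ : ℝ) * (h ρ : ℝ)|)).eventually_lt_const
      (by linarith : (0:ℝ) < ε/2)).exists
  set A : Finset ι := (s ∪ hθ.finite_neg.toFinset) ∪ {ρ₀} with hA
  set Dε : Finset ι := A.filter (fun ρ => h ρ ≠ 0) with hDε
  have hne : ∀ ρ : ι, θ ρ ≠ 0 → h ρ ≠ 0 := fun ρ h1 h2 =>
    h1 (hθ.theta_eq_zero_of_h_eq_zero ρ h2)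
  have hadm : Admissible h θ Dε := by
    refine ⟨?_, ?_, ⟨ρ₀, ?_, hρ₀⟩⟩
    · intro ρ hρ
      simp only [hDε, Finset.coe_filter, Set.mem_setOf_eq]
      exact ⟨by simp [hA, Set.Finite.mem_toFinset, hρ], hne ρ (ne_of_lt hρ)⟩
    · intro ρ hρ
      simp only [hDε, Finset.coe_filter, Set.mem_setOf_eq] at hρ
      exact hρ.2
    · simp only [hDε, Finset.mem_filter]
      exact ⟨by simp [hA], hne ρ₀ (ne_of_gt hρ₀)⟩
  refine ⟨Dε, hadm, ?_⟩
  intro D hD hDεD h' hh' hr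
  -- basic facts about D
  have hs_sub : ∀ ρ ∈ D ∪ s, ρ ∉ D → (θ ρ : ℝ) * (h ρ : ℝ) = 0 := by
    intro ρ hρ hρD
    have hρs : ρ ∈ s := by
      rcases Finset.mem_union.mp hρ with h1 | h1
      · exact absurd h1 hρD
      · exact h1
    have hρA : ρ ∈ A := by simp [hA, Finset.mem_union, hρs]
    have : h ρ = 0 := by
      by_contra hc
      exact hρD (hDεD (by simp [hDε, Finset.mem_filter, hρA, hc]))
    simp [this]
  have hSD_eq : SD h θ D = ∑' ρ : {ρ : ι // ρ ∉ D ∪ s}, (θ ρ.1 : ℝ) * (h ρ.1 : ℝ) :=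
    my_tsum_compl_finset_eq _ Finset.subset_union_left hs_sub hθ.summable
  have hθnonneg : ∀ ρ : ι, ρ ∉ D → (0:ℚ) ≤ θ ρ := by
    intro ρ hρ
    by_contra hc
    exact hρ (hD.1 (by simpa using lt_of_not_ge hc))
  have hS0 : 0 ≤ SD h θ D :=
    tsum_nonneg fun ρ => mul_nonneg (by exact_mod_cast hθnonneg ρ.1 ρ.2) (Nat.cast_nonneg _)
  have hSlt : SD h θ D < ε / 2 := by
    rw [hSD_eq]
    have step1 : (∑' ρ : {ρ : ι // ρ ∉ D ∪ s}, (θ ρ.1 : ℝ) * (h ρ.1 : ℝ)) ≤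
        ∑' ρ : {ρ : ι // ρ ∉ D ∪ s}, |(θ ρ.1 : ℝ) * (h ρ.1 : ℝ)| :=
      Summable.tsum_le_tsum (fun ρ => le_abs_self _) (hθ.summable.subtype _) (habs.subtype _)
    have step2 : (∑' ρ : {ρ : ι // ρ ∉ D ∪ s}, |(θ ρ.1 : ℝ) * (h ρ.1 : ℝ)|) ≤
        ∑' ρ : {ρ : ι // ρ ∉ s}, |(θ ρ.1 : ℝ) * (h ρ.1 : ℝ)| := by
      refine Summable.tsum_le_tsum_of_inj
        (fun ρ => ⟨ρ.1, fun hm => ρ.2 (Finset.mem_union_right _ hm)⟩)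
        (fun a b hab => Subtype.ext (by simpa using congrArg Subtype.val hab))
        (fun c _ => abs_nonneg _) (fun i => le_rfl) (habs.subtype _) (habs.subtype _)
    exact lt_of_le_of_lt (le_trans step1 step2) hs
  -- rank bounds
  haveI : Fintype {ρ : ι // θ ρ < 0} := hθ.finite_neg.fintype
  have hrN : rkNeg θ h' = ((∑ ρ : {ρ : ι // θ ρ < 0}, h' ρ.1 : ℕ) : ℝ) := by
    rw [rkNeg, tsum_fintype]; push_cast; rfl
  have hr1 : (1:ℝ) ≤ rkNeg θ h' := by
    rw [hrN] at hr ⊢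
    exact_mod_cast Nat.one_le_iff_ne_zero.mpr (by exact_mod_cast hr.ne')
  have hrne : rkNeg θ h' ≠ 0 := ne_of_gt hr
  -- summability of θ·h'
  have hsum' : Summable (fun ρ : ι => (θ ρ : ℝ) * (h' ρ : ℝ)) := by
    rw [← summable_abs_iff]
    refine habs.of_nonneg_of_le (fun ρ => abs_nonneg _) (fun ρ => ?_)
    rw [abs_mul, abs_mul, Nat.abs_cast, Nat.abs_cast]
    exact mul_le_mul_of_nonneg_left (by exact_mod_cast hh' ρ) (abs_nonneg _)
  -- split the total sum
  set T : ℝ := ∑' ρ : {ρ : ι // ρ ∉ D}, (θ ρ.1 : ℝ) * (h' ρ.1 : ℝ) with hT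
  have hsplit : thetaVal θ h' = (∑ ρ ∈ D, (θ ρ : ℝ) * (h' ρ : ℝ)) + T := by
    rw [thetaVal, ← Summable.sum_add_tsum_compl (s := D) hsum']
    rfl
  have hT0 : 0 ≤ T :=
    tsum_nonneg fun ρ => mul_nonneg (by exact_mod_cast hθnonneg ρ.1 ρ.2) (Nat.cast_nonneg _)
  have hTle : T ≤ SD h θ D := by
    refine Summable.tsum_le_tsum (fun ρ => ?_) (hsum'.subtype _) (hθ.summable.subtype _)
    exact mul_le_mul_of_nonneg_left (by exact_mod_cast hh' ρ.1)
      (by exact_mod_cast hθnonneg ρ.1 ρ.2)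
  -- ratio sum bounds
  set R : ℝ := ∑ ρ ∈ DsubNeg θ D, (h' ρ : ℝ) / (h ρ : ℝ) with hR
  have hR0 : 0 ≤ R :=
    Finset.sum_nonneg fun ρ _ => div_nonneg (Nat.cast_nonneg _) (Nat.cast_nonneg _)
  have hRle : R ≤ (dD θ D : ℝ) := by
    have := Finset.sum_le_card_nsmul (DsubNeg θ D) (fun ρ => (h' ρ : ℝ) / (h ρ : ℝ)) 1
      (fun ρ hρ => by
        have hρD : ρ ∈ D := Finset.mem_filter.mp hρ |>.1
        have hh0 : h ρ ≠ 0 := hD.2.1 (Finset.mem_coe.mpr hρD)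
        have : (0:ℝ) < (h ρ : ℝ) := by exact_mod_cast Nat.pos_of_ne_zero hh0
        rw [div_le_one this]
        exact_mod_cast hh' ρ)
    simpa [dD, nsmul_eq_mul] using this
  have hd1 : (1:ℝ) ≤ (dD θ D : ℝ) := by
    obtain ⟨ρ₁, hρ₁D, hρ₁θ⟩ := hD.2.2
    have : ρ₁ ∈ DsubNeg θ D := Finset.mem_filter.mpr ⟨hρ₁D, le_of_lt hρ₁θ⟩
    exact_mod_cast Nat.one_le_iff_ne_zero.mpr
      (Finset.card_ne_zero_of_mem this)
  set X : ℝ := SD h θ D / (dD θ D : ℝ) * R with hX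
  have hX0 : 0 ≤ X := mul_nonneg (div_nonneg hS0 (by linarith)) hR0
  have hXle : X ≤ SD h θ D := by
    have h1 : X ≤ SD h θ D / (dD θ D : ℝ) * (dD θ D : ℝ) :=
      mul_le_mul_of_nonneg_left hRle (div_nonneg hS0 (by linarith))
    rwa [div_mul_cancel₀ _ (by linarith : (dD θ D : ℝ) ≠ 0)] at h1
  -- key identity
  have key : muTheta θ h' - muD h θ D h' = (-1 / rkNeg θ h') * (T - X) := by
    rw [muTheta, hsplit, muD, ← hR, ← hX]
    ring
  rw [key, abs_mul]
  have habs1 : |(-1 / rkNeg θ h')| ≤ 1 := by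
    rw [abs_div, abs_neg, abs_one, abs_of_pos hr]
    rw [div_le_one hr]
    exact hr1
  have habsTX : |T - X| ≤ SD h θ D := abs_le.mpr ⟨by linarith, by linarith⟩
  calc |(-1 / rkNeg θ h')| * |T - X| ≤ 1 * (SD h θ D) :=
        mul_le_mul habs1 habsTX (abs_nonneg _) zero_le_one
    _ < ε := by linarith
end
end

section
/- (Saturation increases slopes, used in the proofs of Propositions 1.9 and 1.10.) Let h' and h'' be Hilbert functions on ι such that h''(ρ) ≤ h'(ρ) for all ρ ∈ ι, h''(ρ) = h'(ρ) for all ρ ∈ D₋, r(h') > 0, and both families ρ ↦ θ(ρ)·h'(ρ) and ρ ↦ θ(ρ)·h''(ρ) are summable. Then μ_θ(h'') ≥ μ_θ(h'), and for every admissible finite subset D ⊆ ι, μ_D(h'') ≥ μ_D(h'). (This expresses that the (O_X,G)-submodule generated by the negative part of a sheaf has slope at least that of the sheaf.) -/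
open scoped BigOperators

noncomputable section

/-- Saturation increases slopes (used in the proofs of Propositions 1.9 and 1.10):
if `h'' ≤ h'` pointwise, `h'' = h'` on `D₋`, `r(h') > 0`, and both θ-values are
summable, then `μ_θ(h'') ≥ μ_θ(h')` and `μ_D(h'') ≥ μ_D(h')` for every admissible
`D`. -/
theorem saturation_slope {ι : Type*} (h : ι → ℕ) (θ : ι → ℚ)
    (hθ : IsStabilityFunction h θ) (h' h'' : ι → ℕ)
    (hle : ∀ ρ, h'' ρ ≤ h' ρ) (hneg : ∀ ρ, θ ρ < 0 → h'' ρ = h' ρ)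
    (hr' : 0 < rkNeg θ h')
    (hs' : Summable fun ρ : ι => (θ ρ : ℝ) * (h' ρ : ℝ))
    (hs'' : Summable fun ρ : ι => (θ ρ : ℝ) * (h'' ρ : ℝ)) :
    muTheta θ h' ≤ muTheta θ h'' ∧
    ∀ D : Finset ι, Admissible h θ D → muD h θ D h' ≤ muD h θ D h'' := by
  have hrk : rkNeg θ h'' = rkNeg θ h' :=
    tsum_congr fun ρ => by rw [hneg ρ.1 ρ.2]
  have hterm : ∀ ρ, (θ ρ : ℝ) * (h'' ρ : ℝ) ≤ (θ ρ : ℝ) * (h' ρ : ℝ) := by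
    intro ρ
    rcases lt_or_ge (θ ρ) 0 with hlt | hge
    · rw [hneg ρ hlt]
    · exact mul_le_mul_of_nonneg_left (by exact_mod_cast hle ρ) (by exact_mod_cast hge)
  constructor
  · unfold muTheta
    rw [hrk]
    have hth : thetaVal θ h'' ≤ thetaVal θ h' := Summable.tsum_le_tsum hterm hs'' hs'
    exact div_le_div_of_nonneg_right (neg_le_neg hth) hr'.le
  · intro D hD
    have hSD : 0 ≤ SD h θ D := by
      apply tsum_nonneg
      intro ρ
      have : 0 ≤ θ ρ.1 := le_of_not_gt fun hc => ρ.2 (hD.1 hc)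
      exact mul_nonneg (by exact_mod_cast this) (Nat.cast_nonneg _)
    have hA : (∑ ρ ∈ D, (θ ρ : ℝ) * (h'' ρ : ℝ)) +
          (SD h θ D / (dD θ D : ℝ)) * ∑ ρ ∈ DsubNeg θ D, (h'' ρ : ℝ) / (h ρ : ℝ)
        ≤ (∑ ρ ∈ D, (θ ρ : ℝ) * (h' ρ : ℝ)) +
          (SD h θ D / (dD θ D : ℝ)) * ∑ ρ ∈ DsubNeg θ D, (h' ρ : ℝ) / (h ρ : ℝ) := by
      apply add_le_add
      · exact Finset.sum_le_sum fun ρ _ => hterm ρ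
      · apply mul_le_mul_of_nonneg_left _ (div_nonneg hSD (Nat.cast_nonneg _))
        apply Finset.sum_le_sum
        intro ρ hρ
        have hmem : ρ ∈ D := Finset.mem_of_mem_filter ρ hρ
        have hh : (0:ℝ) < h ρ := by exact_mod_cast Nat.pos_of_ne_zero (hD.2.1 hmem)
        exact div_le_div_of_nonneg_right (by exact_mod_cast hle ρ) hh.le
    unfold muD
    rw [hrk]
    exact mul_le_mul_of_nonpos_left hA (le_of_lt (div_neg_of_neg_of_pos (by norm_num) hr'))
end
end

section
/- (Example 4.1: a constellation that is strictly μ_θ-semistable but μ_D-stable for all large D.) With ι = ℤ, h ≡ 1, and θ given by θ(0) = θ(1) = −1, θ(−1) = θ(−2) = 0, θ(r) = 2^{1−r} for r ≥ 2, θ(−r) = 2^{2−r} for r ≥ 3, one has: (i) θ is a stability function for h (in particular ∑_{r∈ℤ} θ(r) = 0 and D₋ = {0,1}); (ii) for h' the indicator function of {r ∈ ℤ : r ≥ 1}, μ_θ(h') = 0 = μ_θ(h); and (iii) for every N ≥ 3 the set D_N := {−N, …, N} is admissible and μ_{D_N}(h') = 2^{1−N}·(2−N)/(2N−1) < 0.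 -/
open scoped BigOperators

noncomputable section

/-- The Hilbert function `h ≡ 1` of `𝒪_X` for `X = Spec ℂ[x,y]/(xy)`. -/
def hEx : ℤ → ℕ := fun _ => 1

/-- The stability function of Example 4.1: `θ(0) = θ(1) = −1`, `θ(−1) = θ(−2) = 0`,
`θ(r) = 2^{1−r}` for `r ≥ 2`, `θ(−k) = 2^{2−k}` for `k ≥ 3`. -/
def θEx : ℤ → ℚ := fun r =>
  if r = 0 ∨ r = 1 then -1
  else if r = -1 ∨ r = -2 then 0
  else if 2 ≤ r then (2 : ℚ) ^ (1 - r)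
  else (2 : ℚ) ^ (2 + r)

/-- The Hilbert function of the submodule `(x̄)`: the indicator of `{r : ℤ | r ≥ 1}`. -/
def hSub : ℤ → ℕ := fun r => if 1 ≤ r then 1 else 0


set_option maxHeartbeats 1000000

lemma θEx_pos_eval {r : ℤ} (h : 2 ≤ r) : θEx r = (2:ℚ) ^ (1 - r) := by
  unfold θEx; rw [if_neg (by omega), if_neg (by omega), if_pos h]

lemma θEx_neg_eval {r : ℤ} (h : r ≤ -3) : θEx r = (2:ℚ) ^ (2 + r) := by
  unfold θEx; rw [if_neg (by omega), if_neg (by omega), if_neg (by omega)]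

lemma θEx_nonneg_iff (r : ℤ) : 0 ≤ θEx r ↔ ¬(r = 0 ∨ r = 1) := by
  rw [← not_lt]
  constructor
  · intro h hc
    apply h; unfold θEx; rw [if_pos hc]; norm_num
  · intro hc h
    apply hc
    by_contra h01
    rcases le_or_gt 2 r with h2 | h2
    · rw [θEx_pos_eval h2] at h
      exact absurd h (not_lt.2 (zpow_pos (by norm_num : (0:ℚ) < 2) _).le)
    · rcases (by omega : r = -1 ∨ r = -2 ∨ r ≤ -3) with h12 | h12 | h3
      · unfold θEx at h; rw [if_neg h01, if_pos (Or.inl h12)] at h; exact absurd h (by norm_num)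
      · unfold θEx at h; rw [if_neg h01, if_pos (Or.inr h12)] at h; exact absurd h (by norm_num)
      · rw [θEx_neg_eval h3] at h
        exact absurd h (not_lt.2 (zpow_pos (by norm_num : (0:ℚ) < 2) _).le)

lemma θEx_lt_iff (r : ℤ) : θEx r < 0 ↔ (r = 0 ∨ r = 1) := by
  rw [← not_le, θEx_nonneg_iff, not_not]

lemma hasSum_half : HasSum (fun n : ℕ => 2*(1/2:ℝ)^n) 4 := by
  have h := (hasSum_geometric_of_lt_one (by norm_num) (by norm_num : (1/2:ℝ) < 1)).mul_left 2
  rw [show (4:ℝ) = 2 * (1 - 1/2)⁻¹ by norm_num]; exact h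

lemma hasSum_aux (a b : ℝ) :
    HasSum (fun n : ℕ => 2*(1/2:ℝ)^n + (if n = 0 then a else 0) + (if n = 1 then b else 0))
      (4 + a + b) :=
  (hasSum_half.add (hasSum_ite_eq 0 a)).add (hasSum_ite_eq 1 b)

lemma pow_cast_eval (n : ℕ) : (((2:ℚ) ^ (1 - ((n:ℤ)+2)) : ℚ) : ℝ) = 2*(1/2:ℝ)^(n+2) := by
  push_cast
  rw [show (1:ℤ)-((n:ℤ)+2) = -((n:ℤ)+1) by ring, zpow_neg,
    show ((n:ℤ)+1) = ((n+1:ℕ):ℤ) by push_cast; ring, zpow_natCast]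
  rw [one_div, inv_pow, pow_succ, pow_succ]
  field_simp
  ring

lemma h_nonneg : HasSum (fun n : ℕ => ((θEx n : ℚ):ℝ)) (-1) := by
  have h := hasSum_aux (-3) (-2)
  have hf : (fun n : ℕ => ((θEx n : ℚ):ℝ)) =
      fun n : ℕ => 2*(1/2:ℝ)^n + (if n = 0 then (-3:ℝ) else 0) + (if n = 1 then (-2:ℝ) else 0) := by
    funext n
    match n with
    | 0 => norm_num [θEx]
    | 1 => norm_num [θEx]
    | (n+2) =>
      have he : θEx ((n + 2 : ℕ) : ℤ) = (2:ℚ) ^ (1 - ((n:ℤ)+2)) := by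
        rw [show ((n + 2 : ℕ) : ℤ) = (n:ℤ)+2 by push_cast; ring]
        exact θEx_pos_eval (by omega)
      rw [he, pow_cast_eval, if_neg (by omega), if_neg (by omega), add_zero, add_zero]
  rw [hf]
  convert h using 1; norm_num

lemma h_negpart : HasSum (fun n : ℕ => ((θEx (-((n:ℤ)+1)) : ℚ):ℝ)) 1 := by
  have h := hasSum_aux (-2) (-1)
  have hf : (fun n : ℕ => ((θEx (-((n:ℤ)+1)) : ℚ):ℝ)) =
      fun n : ℕ => 2*(1/2:ℝ)^n + (if n = 0 then (-2:ℝ) else 0) + (if n = 1 then (-1:ℝ) else 0) := by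
    funext n
    match n with
    | 0 => norm_num [θEx]
    | 1 => norm_num [θEx]
    | (n+2) =>
      have hexp : (2:ℤ) + (-(((n+2 : ℕ):ℤ)+1)) = 1 - ((n:ℤ)+2) := by push_cast; ring
      have he : θEx (-(((n+2 : ℕ):ℤ)+1)) = (2:ℚ) ^ (1 - ((n:ℤ)+2)) := by
        rw [θEx_neg_eval (by push_cast; omega), hexp]
      rw [he, pow_cast_eval, if_neg (by omega), if_neg (by omega), add_zero, add_zero]
  rw [hf]
  convert h using 1; norm_num

lemma hasSum_theta_hEx : HasSum (fun ρ : ℤ => ((θEx ρ : ℚ):ℝ) * ((hEx ρ : ℕ):ℝ)) 0 := by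
  have hf : (fun ρ : ℤ => ((θEx ρ : ℚ):ℝ) * ((hEx ρ : ℕ):ℝ)) =
      fun ρ : ℤ => ((θEx ρ : ℚ):ℝ) := by
    funext ρ; simp [hEx]
  rw [hf, show (0:ℝ) = -1 + 1 by norm_num]
  exact h_nonneg.of_nat_of_neg_add_one h_negpart

lemma h_nonneg_sub : HasSum (fun n : ℕ => ((θEx n : ℚ):ℝ) * ((hSub n : ℕ):ℝ)) 0 := by
  have h := hasSum_aux (-2) (-2)
  have hf : (fun n : ℕ => ((θEx n : ℚ):ℝ) * ((hSub n : ℕ):ℝ)) =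
      fun n : ℕ => 2*(1/2:ℝ)^n + (if n = 0 then (-2:ℝ) else 0) + (if n = 1 then (-2:ℝ) else 0) := by
    funext n
    match n with
    | 0 => norm_num [θEx, hSub]
    | 1 => norm_num [θEx, hSub]
    | (n+2) =>
      have he : θEx ((n + 2 : ℕ) : ℤ) = (2:ℚ) ^ (1 - ((n:ℤ)+2)) := by
        rw [show ((n + 2 : ℕ) : ℤ) = (n:ℤ)+2 by push_cast; ring]
        exact θEx_pos_eval (by omega)
      have hs : hSub ((n + 2 : ℕ) : ℤ) = 1 := by
        unfold hSub; rw [if_pos (by push_cast; omega)]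
      rw [he, hs, pow_cast_eval, if_neg (by omega), if_neg (by omega), add_zero, add_zero,
        Nat.cast_one, mul_one]
  rw [hf]
  convert h using 1; norm_num

lemma hasSum_theta_hSub : HasSum (fun ρ : ℤ => ((θEx ρ : ℚ):ℝ) * ((hSub ρ : ℕ):ℝ)) 0 := by
  have h2 : HasSum (fun n : ℕ => ((θEx (-((n:ℤ)+1)) : ℚ):ℝ) * ((hSub (-((n:ℤ)+1)) : ℕ):ℝ)) 0 := by
    have hz : (fun n : ℕ => ((θEx (-((n:ℤ)+1)) : ℚ):ℝ) * ((hSub (-((n:ℤ)+1)) : ℕ):ℝ)) =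
        fun _ : ℕ => (0:ℝ) := by
      funext n
      have : hSub (-((n:ℤ)+1)) = 0 := by unfold hSub; rw [if_neg (by omega)]
      rw [this, Nat.cast_zero, mul_zero]
    rw [hz]; exact hasSum_zero
  rw [show (0:ℝ) = 0 + 0 by norm_num]
  exact h_nonneg_sub.of_nat_of_neg_add_one h2

lemma Icc_succ {N : ℤ} (hN : 0 ≤ N) :
    Finset.Icc (-(N+1)) (N+1) = insert (-(N+1)) (insert (N+1) (Finset.Icc (-N) N)) := by
  ext x; simp only [Finset.mem_Icc, Finset.mem_insert]; omega

lemma not_mem_top {N : ℤ} (hN : 0 ≤ N) : (N+1) ∉ Finset.Icc (-N) N := by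
  simp only [Finset.mem_Icc]; omega

lemma not_mem_bot {N : ℤ} (hN : 0 ≤ N) : -(N+1) ∉ insert (N+1) (Finset.Icc (-N) N) := by
  simp only [Finset.mem_insert, Finset.mem_Icc]; omega

lemma two_zpow_succ (N : ℤ) : (2:ℝ) ^ (1 - N) = 2 * (2:ℝ) ^ (-N) := by
  rw [show (1:ℤ) - N = 1 + -N by ring, zpow_add₀ (by norm_num : (2:ℝ) ≠ 0), zpow_one]

lemma sumA : ∀ N : ℤ, 3 ≤ N →
    ∑ ρ ∈ Finset.Icc (-N) N, ((θEx ρ : ℚ):ℝ) = -3 * (2:ℝ) ^ (1 - N) := by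
  refine Int.le_induction
    (motive := fun N _ => ∑ ρ ∈ Finset.Icc (-N) N, ((θEx ρ : ℚ):ℝ) = -3 * (2:ℝ) ^ (1 - N)) ?_ ?_
  · beta_reduce
    have : Finset.Icc (-3:ℤ) 3 = {-3,-2,-1,0,1,2,3} := by decide
    rw [this]
    norm_num [θEx]
  · intro N hN ih
    beta_reduce
    beta_reduce at ih
    rw [Icc_succ (by omega), Finset.sum_insert (not_mem_bot (by omega)),
      Finset.sum_insert (not_mem_top (by omega)), ih,
      θEx_pos_eval (by omega : (2:ℤ) ≤ N + 1), θEx_neg_eval (by omega : -(N+1) ≤ -3)]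
    push_cast
    rw [show (1:ℤ) - (N+1) = -N by ring, show (2:ℤ) + -(N+1) = 1 - N by ring,
      two_zpow_succ N]
    ring

lemma sumB : ∀ N : ℤ, 3 ≤ N →
    ∑ ρ ∈ Finset.Icc (-N) N, ((θEx ρ : ℚ):ℝ) * ((hSub ρ : ℕ):ℝ) = -(2:ℝ) ^ (1 - N) := by
  refine Int.le_induction (motive := fun N _ => ∑ ρ ∈ Finset.Icc (-N) N,
    ((θEx ρ : ℚ):ℝ) * ((hSub ρ : ℕ):ℝ) = -(2:ℝ) ^ (1 - N)) ?_ ?_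
  · beta_reduce
    have : Finset.Icc (-3:ℤ) 3 = {-3,-2,-1,0,1,2,3} := by decide
    rw [this]
    norm_num [θEx, hSub]
  · intro N hN ih
    beta_reduce
    beta_reduce at ih
    rw [Icc_succ (by omega), Finset.sum_insert (not_mem_bot (by omega)),
      Finset.sum_insert (not_mem_top (by omega)), ih,
      θEx_pos_eval (by omega : (2:ℤ) ≤ N + 1), θEx_neg_eval (by omega : -(N+1) ≤ -3),
      show hSub (N+1) = 1 by unfold hSub; rw [if_pos (by omega)],
      show hSub (-(N+1)) = 0 by unfold hSub; rw [if_neg (by omega)]]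
    push_cast
    rw [show (1:ℤ) - (N+1) = -N by ring, two_zpow_succ N]
    ring

lemma DsubNeg_eq {N : ℤ} (hN : 3 ≤ N) :
    DsubNeg θEx (Finset.Icc (-N) N) = Finset.Icc (-N) N \ {0, 1} := by
  ext ρ
  simp only [DsubNeg, Finset.mem_filter, Finset.mem_sdiff, Finset.mem_insert,
    Finset.mem_singleton, θEx_nonneg_iff]

lemma card_DsubNeg {N : ℤ} (hN : 3 ≤ N) :
    ((DsubNeg θEx (Finset.Icc (-N) N)).card : ℝ) = 2 * (N:ℝ) - 1 := by
  have hsub : ({0,1} : Finset ℤ) ⊆ Finset.Icc (-N) N := by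
    intro x hx
    simp only [Finset.mem_insert, Finset.mem_singleton] at hx
    simp only [Finset.mem_Icc]
    omega
  rw [DsubNeg_eq hN, Finset.card_sdiff_of_subset hsub]
  have h1 : (Finset.Icc (-N) N).card = (2*N+1).toNat := by
    rw [Int.card_Icc]; congr 1; ring
  have h2 : ({0,1} : Finset ℤ).card = 2 := by decide
  rw [h1, h2]
  have h4 : (((2*N+1).toNat : ℤ) : ℝ) = 2*(N:ℝ)+1 := by
    rw [Int.toNat_of_nonneg (by omega)]; push_cast; ring
  push_cast [Nat.cast_sub (by omega : 2 ≤ (2*N+1).toNat)]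
  rw [show (((2*N+1).toNat : ℕ) : ℝ) = (((2*N+1).toNat : ℤ) : ℝ) by push_cast; ring, h4]
  ring

lemma sumC {N : ℤ} (hN : 3 ≤ N) :
    ∑ ρ ∈ DsubNeg θEx (Finset.Icc (-N) N), ((hSub ρ : ℕ):ℝ) = (N:ℝ) - 1 := by
  have h1 : ∑ ρ ∈ DsubNeg θEx (Finset.Icc (-N) N), ((hSub ρ : ℕ):ℝ)
      = ∑ ρ ∈ DsubNeg θEx (Finset.Icc (-N) N), (if 1 ≤ ρ then (1:ℝ) else 0) := by
    refine Finset.sum_congr rfl fun ρ _ => ?_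
    unfold hSub; split <;> norm_num
  rw [h1, Finset.sum_boole]
  have h2 : (DsubNeg θEx (Finset.Icc (-N) N)).filter (fun ρ => 1 ≤ ρ) = Finset.Icc 2 N := by
    rw [DsubNeg_eq hN]
    ext ρ
    simp only [Finset.mem_filter, Finset.mem_sdiff, Finset.mem_Icc, Finset.mem_insert,
      Finset.mem_singleton]
    omega
  rw [h2]
  have h3 : (((N-1).toNat : ℤ) : ℝ) = (N:ℝ) - 1 := by
    rw [Int.toNat_of_nonneg (by omega)]; push_cast; ring
  rw [Int.card_Icc, show N + 1 - 2 = N - 1 by ring,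
    show (((N-1).toNat : ℕ) : ℝ) = (((N-1).toNat : ℤ) : ℝ) by push_cast; ring, h3]

lemma rkNeg_eq (h' : ℤ → ℕ) : rkNeg θEx h' = (h' 0 : ℝ) + (h' 1 : ℝ) := by
  have hdef : rkNeg θEx h' = ∑' ρ : ↑{ρ : ℤ | θEx ρ < 0}, ((h' ρ.1 : ℕ):ℝ) := rfl
  rw [hdef]
  have hset : {ρ : ℤ | θEx ρ < 0} = (({0,1} : Finset ℤ) : Set ℤ) := by
    ext r; simp [θEx_lt_iff]
  rw [tsum_congr_set_coe (fun ρ : ℤ => ((h' ρ : ℕ):ℝ)) hset]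
  have hdef2 : (∑' x : ↑(({0,1} : Finset ℤ) : Set ℤ), ((h' x.1 : ℕ):ℝ))
      = ∑' x : {x : ℤ // x ∈ ({0,1} : Finset ℤ)}, ((h' x.1 : ℕ):ℝ) := rfl
  rw [hdef2, Finset.tsum_subtype ({0,1} : Finset ℤ) (fun ρ : ℤ => ((h' ρ : ℕ):ℝ)),
    Finset.sum_pair (by norm_num : (0:ℤ) ≠ 1)]

lemma SD_eq {N : ℤ} (hN : 3 ≤ N) : SD hEx θEx (Finset.Icc (-N) N) = 3 * (2:ℝ) ^ (1 - N) := by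
  have hsum := Summable.sum_add_tsum_compl (s := Finset.Icc (-N) N) hasSum_theta_hEx.summable
  have h0 : ∑' ρ : ℤ, ((θEx ρ : ℚ):ℝ) * ((hEx ρ : ℕ):ℝ) = 0 := hasSum_theta_hEx.tsum_eq
  have hA : ∑ ρ ∈ Finset.Icc (-N) N, ((θEx ρ : ℚ):ℝ) * ((hEx ρ : ℕ):ℝ)
      = -3 * (2:ℝ) ^ (1 - N) := by
    have := sumA N hN
    simpa [hEx] using this
  have hSDdef : SD hEx θEx (Finset.Icc (-N) N)
      = ∑' ρ : ↑((Finset.Icc (-N) N : Set ℤ))ᶜ, ((θEx ρ.1 : ℚ):ℝ) * ((hEx ρ.1 : ℕ):ℝ) := rfl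
  rw [hSDdef]
  rw [hA, h0] at hsum
  linarith

/-- Example 4.1: a `(G,h)`-constellation that is strictly μ_θ-semistable but
μ_D-stable for all `D_N = {−N,…,N}` with `N ≥ 3`. -/
theorem example_4_1 :
    IsStabilityFunction hEx θEx ∧
    {ρ : ℤ | θEx ρ < 0} = {0, 1} ∧
    muTheta θEx hSub = 0 ∧ muTheta θEx hEx = 0 ∧
    ∀ N : ℤ, 3 ≤ N →
      Admissible hEx θEx (Finset.Icc (-N) N) ∧
      muD hEx θEx (Finset.Icc (-N) N) hSub =
        (2 : ℝ) ^ (1 - N) * ((2 - (N : ℝ)) / (2 * (N : ℝ) - 1)) ∧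
      muD hEx θEx (Finset.Icc (-N) N) hSub < 0 := by
  have hsetneg : {ρ : ℤ | θEx ρ < 0} = ({0, 1} : Set ℤ) := by
    ext r; simp [θEx_lt_iff, Set.mem_insert_iff]
  have hrk : rkNeg θEx hSub = 1 := by
    rw [rkNeg_eq]; norm_num [hSub]
  refine ⟨?_, hsetneg, ?_, ?_, ?_⟩
  · refine ⟨?_, ?_, ?_, hasSum_theta_hEx.summable, hasSum_theta_hEx.tsum_eq⟩
    · rw [hsetneg]
      exact (Set.finite_singleton 1).insert 0
    · refine Set.Infinite.mono (fun r hr => ?_) (Set.Ici_infinite (2:ℤ))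
      have h2 : (2:ℤ) ≤ r := hr
      simp only [Set.mem_setOf_eq]
      rw [θEx_pos_eval h2]
      exact zpow_pos (by norm_num) _
    · intro ρ h
      exact absurd h (by simp [hEx])
  · unfold muTheta thetaVal
    rw [hasSum_theta_hSub.tsum_eq]
    simp
  · unfold muTheta thetaVal
    rw [hasSum_theta_hEx.tsum_eq]
    simp
  · intro N hN
    have hNr : (3:ℝ) ≤ (N:ℝ) := by exact_mod_cast hN
    have hden : 2 * (N:ℝ) - 1 ≠ 0 := by linarith
    have hC : ∑ ρ ∈ DsubNeg θEx (Finset.Icc (-N) N), ((hSub ρ : ℕ):ℝ) / ((hEx ρ : ℕ):ℝ)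
        = (N:ℝ) - 1 := by
      rw [← sumC hN]
      refine Finset.sum_congr rfl fun ρ _ => by simp [hEx]
    have hmu : muD hEx θEx (Finset.Icc (-N) N) hSub =
        (2 : ℝ) ^ (1 - N) * ((2 - (N : ℝ)) / (2 * (N : ℝ) - 1)) := by
      unfold muD dD
      rw [hrk, sumB N hN, SD_eq hN, hC, card_DsubNeg hN]
      field_simp
      ring
    refine ⟨⟨?_, ?_, ⟨2, ?_, ?_⟩⟩, hmu, ?_⟩
    · intro ρ hρ
      have := (θEx_lt_iff ρ).1 hρ
      simp only [Finset.coe_Icc, Set.mem_Icc]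
      omega
    · intro ρ _
      simp [hEx]
    · simp only [Finset.mem_Icc]; omega
    · rw [θEx_pos_eval le_rfl]
      exact zpow_pos (by norm_num) _
    · rw [hmu]
      have hx : (0:ℝ) < (2:ℝ) ^ (1 - N) := zpow_pos (by norm_num) _
      exact mul_neg_of_pos_of_neg hx
        (div_neg_of_neg_of_pos (by linarith) (by linarith))
end
end

section
/- (Classification of 𝔾_m-stable ideals, §4.) Every homogeneous ideal I of ℂ[x,y] (homogeneous with respect to the ℤ-grading with weight(x) = 1 and weight(y) = −1) satisfying x·y ∈ I is equal to one of the following: the unit ideal ℂ[x,y]; the ideal (xy); an ideal (x^p, xy) with p ≥ 1; an ideal (y^q, xy) with q ≥ 1; or an ideal (x^p, y^q, xy) with p, q ≥ 1. Equivalently, the nonzero proper 𝔾_m-stable ideals of ℂ[x,y]/(xy) are exactly I_p = (x̄^p) for p ≥ 1, J_q = (ȳ^q) for q ≥ 1, and K_{p,q} = (x̄^p, ȳ^q) for p, q ≥ 1. -/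
noncomputable section

open MvPolynomial

/-- The weights of the `𝔾_m`-action: `weight x = 1`, `weight y = −1`. -/
def w : Fin 2 → ℤ := ![1, -1]

/-- An ideal of `ℂ[x,y]` is homogeneous (with respect to the ℤ-grading with
`weight x = 1`, `weight y = −1`) if it contains every weighted-homogeneous component
of each of its elements. -/
def IsWHomogeneousIdeal (I : Ideal (MvPolynomial (Fin 2) ℂ)) : Prop :=
  ∀ p ∈ I, ∀ n : ℤ, weightedHomogeneousComponent w n p ∈ I

lemma wd (d : Fin 2 →₀ ℕ) : Finsupp.weight w d = (d 0 : ℤ) - (d 1 : ℤ) := by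
  rw [Finsupp.weight_apply, Finsupp.sum_fintype _ _ (by simp), Fin.sum_univ_two]
  simp [w]
  ring

lemma eqs0 (d : Fin 2 →₀ ℕ) (h : d 1 = 0) : d = Finsupp.single 0 (d 0) := by
  ext j; fin_cases j <;> simp [Finsupp.single_apply, h]

lemma eqs1 (d : Fin 2 →₀ ℕ) (h : d 0 = 0) : d = Finsupp.single 1 (d 1) := by
  ext j; fin_cases j <;> simp [Finsupp.single_apply, h]

lemma mono_xy : (monomial (Finsupp.single 0 1 + Finsupp.single 1 1) (1:ℂ) :
    MvPolynomial (Fin 2) ℂ) = X 0 * X 1 := by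
  rw [X, X, monomial_mul, one_mul]

lemma xy_mem (I : Ideal (MvPolynomial (Fin 2) ℂ))
    (hxy : (X 0 * X 1 : MvPolynomial (Fin 2) ℂ) ∈ I)
    {g : MvPolynomial (Fin 2) ℂ} (hg : ∀ d ∈ g.support, 1 ≤ d 0 ∧ 1 ≤ d 1) : g ∈ I := by
  have : g ∈ Ideal.span ((fun s => monomial s (1:ℂ)) ''
      {Finsupp.single 0 1 + Finsupp.single 1 1}) := by
    rw [mem_ideal_span_monomial_image]
    intro d hd
    refine ⟨_, Set.mem_singleton _, ?_⟩
    obtain ⟨h0, h1⟩ := hg d hd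
    intro j; fin_cases j
    · simpa using h0
    · simpa using h1
  refine Ideal.span_le.2 ?_ this
  rw [Set.image_singleton, Set.singleton_subset_iff, mono_xy]
  exact hxy

lemma key (I : Ideal (MvPolynomial (Fin 2) ℂ)) (hI : IsWHomogeneousIdeal I)
    (hxy : (X 0 * X 1 : MvPolynomial (Fin 2) ℂ) ∈ I)
    {f : MvPolynomial (Fin 2) ℂ} (hf : f ∈ I) (i : Fin 2) (n : ℕ)
    (h : coeff (Finsupp.single i n) f ≠ 0) :
    (X i : MvPolynomial (Fin 2) ℂ) ^ n ∈ I := by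
  set c := coeff (Finsupp.single i n) f with hc
  set m : ℤ := Finsupp.weight w (Finsupp.single i n) with hm
  set h₀ := weightedHomogeneousComponent w m f with hh0
  have hh0I : h₀ ∈ I := hI f hf m
  set g : MvPolynomial (Fin 2) ℂ := h₀ - C c * X i ^ n with hgdef
  have hco : coeff (Finsupp.single i n) h₀ = c := by
    rw [hh0, coeff_weightedHomogeneousComponent, if_pos rfl]
  have hgsupp : ∀ d ∈ g.support, 1 ≤ d 0 ∧ 1 ≤ d 1 := by
    intro d hd
    rw [mem_support_iff] at hd
    have hcg : coeff d g = coeff d h₀ - c * (if Finsupp.single i n = d then 1 else 0) := by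
      rw [hgdef, coeff_sub, coeff_C_mul, coeff_X_pow]
    by_cases hdn : d = Finsupp.single i n
    · exfalso; apply hd
      rw [hcg, if_pos hdn.symm, hdn, hco]; ring
    · rw [hcg, if_neg (Ne.symm hdn), mul_zero, sub_zero] at hd
      have hw : Finsupp.weight w d = m := by
        by_contra hw
        rw [hh0, coeff_weightedHomogeneousComponent, if_neg hw] at hd
        exact hd rfl
      have hwd := wd d
      rw [hw, hm, wd] at hwd
      fin_cases i
      · simp only [Finsupp.single_apply, if_pos rfl] at hwd
        norm_num at hwd
        have hd1 : d 1 ≠ 0 := by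
          intro h0
          apply hdn
          rw [eqs0 d h0]
          congr 1
          omega
        omega
      · simp only [Finsupp.single_apply] at hwd
        norm_num at hwd
        have hd0 : d 0 ≠ 0 := by
          intro h0
          apply hdn
          rw [eqs1 d h0]
          congr 1
          omega
        omega
  have hgI : g ∈ I := xy_mem I hxy hgsupp
  have hcx : C c * X i ^ n ∈ I := by
    have := I.sub_mem hh0I hgI
    simpa [hgdef] using this
  have := I.mul_mem_left (C c⁻¹) hcx
  rw [← mul_assoc, ← C_mul, inv_mul_cancel₀ h, C_1, one_mul] at this
  exact this

lemma exy_le {d : Fin 2 →₀ ℕ} (h0 : 1 ≤ d 0) (h1 : 1 ≤ d 1) :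
    Finsupp.single 0 1 + Finsupp.single 1 1 ≤ d := by
  intro j; fin_cases j
  · simpa using h0
  · simpa using h1

lemma supp_cases (I : Ideal (MvPolynomial (Fin 2) ℂ)) (hI : IsWHomogeneousIdeal I)
    (hxy : (X 0 * X 1 : MvPolynomial (Fin 2) ℂ) ∈ I)
    {f : MvPolynomial (Fin 2) ℂ} (hf : f ∈ I) {d : Fin 2 →₀ ℕ} (hd : d ∈ f.support) :
    (1 ≤ d 0 ∧ 1 ≤ d 1) ∨ (d 1 = 0 ∧ (X 0 : MvPolynomial (Fin 2) ℂ) ^ (d 0) ∈ I) ∨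
      (d 0 = 0 ∧ (X 1 : MvPolynomial (Fin 2) ℂ) ^ (d 1) ∈ I) := by
  rw [mem_support_iff] at hd
  by_cases h1 : d 1 = 0
  · refine Or.inr (Or.inl ⟨h1, key I hI hxy hf 0 (d 0) ?_⟩)
    rw [← eqs0 d h1]; exact hd
  by_cases h0 : d 0 = 0
  · refine Or.inr (Or.inr ⟨h0, key I hI hxy hf 1 (d 1) ?_⟩)
    rw [← eqs1 d h0]; exact hd
  · left; omega

/-- Classification of `𝔾_m`-stable ideals (§4): every homogeneous ideal of `ℂ[x,y]`
containing `xy` is the unit ideal, `(xy)`, `(x^p, xy)` with `p ≥ 1`, `(y^q, xy)` with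
`q ≥ 1`, or `(x^p, y^q, xy)` with `p, q ≥ 1`. -/
theorem classification_of_homogeneous_ideals (I : Ideal (MvPolynomial (Fin 2) ℂ))
    (hI : IsWHomogeneousIdeal I) (hxy : (X 0 * X 1 : MvPolynomial (Fin 2) ℂ) ∈ I) :
    I = ⊤ ∨
    I = Ideal.span {(X 0 * X 1 : MvPolynomial (Fin 2) ℂ)} ∨
    (∃ p : ℕ, 1 ≤ p ∧ I = Ideal.span {(X 0 ^ p : MvPolynomial (Fin 2) ℂ), X 0 * X 1}) ∨
    (∃ q : ℕ, 1 ≤ q ∧ I = Ideal.span {(X 1 ^ q : MvPolynomial (Fin 2) ℂ), X 0 * X 1}) ∨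
    (∃ p q : ℕ, 1 ≤ p ∧ 1 ≤ q ∧
      I = Ideal.span {(X 0 ^ p : MvPolynomial (Fin 2) ℂ), X 1 ^ q, X 0 * X 1}) := by
  classical
  by_cases h1 : (1 : MvPolynomial (Fin 2) ℂ) ∈ I
  · exact Or.inl ((Ideal.eq_top_iff_one I).mpr h1)
  by_cases hp : ∃ n, (X 0 : MvPolynomial (Fin 2) ℂ) ^ n ∈ I
  · have hp1 : 1 ≤ Nat.find hp := by
      rcases Nat.eq_zero_or_pos (Nat.find hp) with h | h
      · exfalso; apply h1
        have := Nat.find_spec hp; rwa [h, pow_zero] at this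
      · exact h
    by_cases hq : ∃ n, (X 1 : MvPolynomial (Fin 2) ℂ) ^ n ∈ I
    · -- case (x^p, y^q, xy)
      have hq1 : 1 ≤ Nat.find hq := by
        rcases Nat.eq_zero_or_pos (Nat.find hq) with h | h
        · exfalso; apply h1
          have := Nat.find_spec hq; rwa [h, pow_zero] at this
        · exact h
      refine Or.inr (Or.inr (Or.inr (Or.inr ⟨Nat.find hp, Nat.find hq, hp1, hq1, ?_⟩)))
      have hset : ({X 0 ^ Nat.find hp, X 1 ^ Nat.find hq, X 0 * X 1} :
          Set (MvPolynomial (Fin 2) ℂ)) = (fun s => monomial s (1:ℂ)) ''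
          {Finsupp.single 0 (Nat.find hp), Finsupp.single 1 (Nat.find hq),
            Finsupp.single 0 1 + Finsupp.single 1 1} := by
        rw [Set.image_insert_eq, Set.image_insert_eq, Set.image_singleton, mono_xy,
          ← X_pow_eq_monomial, ← X_pow_eq_monomial]
      refine le_antisymm ?_ ?_
      · intro f hf
        rw [hset, mem_ideal_span_monomial_image]
        intro d hd
        rcases supp_cases I hI hxy hf hd with ⟨h0, hh1⟩ | ⟨_, hx⟩ | ⟨_, hy⟩
        · exact ⟨_, by simp, exy_le h0 hh1⟩
        · exact ⟨Finsupp.single 0 (Nat.find hp), by simp,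
            Finsupp.single_le_iff.mpr (Nat.find_min' hp hx)⟩
        · exact ⟨Finsupp.single 1 (Nat.find hq), by simp,
            Finsupp.single_le_iff.mpr (Nat.find_min' hq hy)⟩
      · rw [Ideal.span_le]
        rintro g hg
        simp only [Set.mem_insert_iff, Set.mem_singleton_iff] at hg
        rcases hg with rfl | rfl | rfl
        · exact Nat.find_spec hp
        · exact Nat.find_spec hq
        · exact hxy
    · -- case (x^p, xy)
      refine Or.inr (Or.inr (Or.inl ⟨Nat.find hp, hp1, ?_⟩))
      have hset : ({X 0 ^ Nat.find hp, X 0 * X 1} : Set (MvPolynomial (Fin 2) ℂ)) =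
          (fun s => monomial s (1:ℂ)) ''
          {Finsupp.single 0 (Nat.find hp), Finsupp.single 0 1 + Finsupp.single 1 1} := by
        rw [Set.image_insert_eq, Set.image_singleton, mono_xy, ← X_pow_eq_monomial]
      refine le_antisymm ?_ ?_
      · intro f hf
        rw [hset, mem_ideal_span_monomial_image]
        intro d hd
        rcases supp_cases I hI hxy hf hd with ⟨h0, hh1⟩ | ⟨_, hx⟩ | ⟨_, hy⟩
        · exact ⟨_, by simp, exy_le h0 hh1⟩
        · exact ⟨Finsupp.single 0 (Nat.find hp), by simp,
            Finsupp.single_le_iff.mpr (Nat.find_min' hp hx)⟩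
        · exact absurd ⟨d 1, hy⟩ hq
      · rw [Ideal.span_le]
        rintro g hg
        simp only [Set.mem_insert_iff, Set.mem_singleton_iff] at hg
        rcases hg with rfl | rfl
        · exact Nat.find_spec hp
        · exact hxy
  · by_cases hq : ∃ n, (X 1 : MvPolynomial (Fin 2) ℂ) ^ n ∈ I
    · -- case (y^q, xy)
      have hq1 : 1 ≤ Nat.find hq := by
        rcases Nat.eq_zero_or_pos (Nat.find hq) with h | h
        · exfalso; apply h1
          have := Nat.find_spec hq; rwa [h, pow_zero] at this
        · exact h
      refine Or.inr (Or.inr (Or.inr (Or.inl ⟨Nat.find hq, hq1, ?_⟩)))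
      have hset : ({X 1 ^ Nat.find hq, X 0 * X 1} : Set (MvPolynomial (Fin 2) ℂ)) =
          (fun s => monomial s (1:ℂ)) ''
          {Finsupp.single 1 (Nat.find hq), Finsupp.single 0 1 + Finsupp.single 1 1} := by
        rw [Set.image_insert_eq, Set.image_singleton, mono_xy, ← X_pow_eq_monomial]
      refine le_antisymm ?_ ?_
      · intro f hf
        rw [hset, mem_ideal_span_monomial_image]
        intro d hd
        rcases supp_cases I hI hxy hf hd with ⟨h0, hh1⟩ | ⟨_, hx⟩ | ⟨_, hy⟩
        · exact ⟨_, by simp, exy_le h0 hh1⟩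
        · exact absurd ⟨d 0, hx⟩ hp
        · exact ⟨Finsupp.single 1 (Nat.find hq), by simp,
            Finsupp.single_le_iff.mpr (Nat.find_min' hq hy)⟩
      · rw [Ideal.span_le]
        rintro g hg
        simp only [Set.mem_insert_iff, Set.mem_singleton_iff] at hg
        rcases hg with rfl | rfl
        · exact Nat.find_spec hq
        · exact hxy
    · -- case (xy)
      refine Or.inr (Or.inl ?_)
      have hset : ({X 0 * X 1} : Set (MvPolynomial (Fin 2) ℂ)) =
          (fun s => monomial s (1:ℂ)) '' {Finsupp.single 0 1 + Finsupp.single 1 1} := by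
        rw [Set.image_singleton, mono_xy]
      refine le_antisymm ?_ ?_
      · intro f hf
        rw [hset, mem_ideal_span_monomial_image]
        intro d hd
        rcases supp_cases I hI hxy hf hd with ⟨h0, hh1⟩ | ⟨_, hx⟩ | ⟨_, hy⟩
        · exact ⟨_, by simp, exy_le h0 hh1⟩
        · exact absurd ⟨d 0, hx⟩ hp
        · exact absurd ⟨d 1, hy⟩ hq
      · rw [Ideal.span_le, Set.singleton_subset_iff]
        exact hxy
end
end
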